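/- arXiv:2310.18736 — 2 statements merged into one kernel-verified Lean document; each statement's English description precedes it below -/
import Mathlib

section
/- In the men-proposing deferred acceptance algorithm with n men and n women, the total number of proposals made over the entire execution is at most n^2 - n + 1. -/
open scoped Classical

noncomputable section

/-- A two-sided matching market with `n` men and `n` women, each with a complete
strict preference order over the other side. `mpref m k` is man `m`'s `k`-th
favourite woman (0 = top), and `wpref w k` is woman `w`'s `k`-th favourite man. -/
structure Profile (n : ℕ) where
  mpref : Fin n → (Fin n ≃ Fin n)
  wpref : Fin n → (Fin n ≃ Fin n)

namespace Profile

variable {n : ℕ}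

/-- rank (0 = best) of woman `w` in man `m`'s preference list -/
def mrank (P : Profile n) (m w : Fin n) : ℕ := ((P.mpref m).symm w : ℕ)

/-- rank (0 = best) of man `m` in woman `w`'s preference list -/
def wrank (P : Profile n) (w m : Fin n) : ℕ := ((P.wpref w).symm m : ℕ)

/-- man `m` strictly prefers woman `w` to woman `w'` -/
def mPrefers (P : Profile n) (m w w' : Fin n) : Prop := P.mrank m w < P.mrank m w'

/-- woman `w` strictly prefers man `m` to man `m'` -/
def wPrefers (P : Profile n) (w m m' : Fin n) : Prop := P.wrank w m < P.wrank w m'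

/-- top choice of man `m` -/
def topM (P : Profile n) (m : Fin n) : Fin n := P.mpref m ⟨0, m.pos⟩

/-- top choice of woman `w` -/
def topW (P : Profile n) (w : Fin n) : Fin n := P.wpref w ⟨0, w.pos⟩

/-- the profile with the roles of men and women exchanged -/
def swap (P : Profile n) : Profile n := ⟨P.wpref, P.mpref⟩

/-- State of the men-proposing deferred acceptance algorithm:
`next m` = number of proposals man `m` has made so far,
`held w` = the man woman `w` currently tentatively holds (if any). -/
structure DAState (n : ℕ) where
  next : Fin n → ℕ
  held : Fin n → Option (Fin n)

def initState (n : ℕ) : DAState n := ⟨fun _ => 0, fun _ => none⟩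

/-- the men currently unmatched (held by no woman) -/
def unmatched (s : DAState n) : Finset (Fin n) :=
  Finset.univ.filter fun m => ∀ w : Fin n, s.held w ≠ some m

/-- the woman man `m` proposes to next: his most preferred woman among those
who have not rejected him yet -/
def target (P : Profile n) (s : DAState n) (m : Fin n) : Fin n :=
  P.mpref m ⟨s.next m % n, Nat.mod_lt _ m.pos⟩

/-- the men proposing to woman `w` in the current round -/
def proposers (P : Profile n) (s : DAState n) (w : Fin n) : Finset (Fin n) :=
  (unmatched s).filter fun m => target P s m = w

/-- one round of the men-proposing deferred acceptance algorithm: every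
unmatched man proposes to his favourite woman who has not rejected him yet,
and every woman tentatively holds her favourite among her current partner
and the new proposers, rejecting the rest -/
def step (P : Profile n) (s : DAState n) : DAState n where
  next := fun m => if m ∈ unmatched s then s.next m + 1 else s.next m
  held := fun w => ((proposers P s w ∪ (s.held w).toFinset).toList).argmin (P.wrank w)

/-- the state after `k` rounds of men-proposing deferred acceptance -/
def stateAt (P : Profile n) (k : ℕ) : DAState n := (step P)^[k] (initState n)

/-- the final state of men-proposing deferred acceptance
(`n * n + 1` iterations is always enough to reach the fixed point) -/
def finalState (P : Profile n) : DAState n := stateAt P (n * n + 1)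

/-- total number of proposals made during the men-proposing DA -/
def totalProposals (P : Profile n) : ℕ := ∑ m : Fin n, (finalState P).next m

/-- number of rounds of the men-proposing DA (rounds in which some proposal is made) -/
def rounds (P : Profile n) : ℕ :=
  ((Finset.range (n * n + 1)).filter fun k => (unmatched (stateAt P k)).Nonempty).card

/-- total number of proposals received by woman `w` during the men-proposing DA -/
def proposalsTo (P : Profile n) (w : Fin n) : ℕ :=
  ∑ k ∈ Finset.range (n * n + 1), (proposers P (stateAt P k) w).card

/-- man `m` proposes to woman `w` at some point during the men-proposing DA -/
def proposedTo (P : Profile n) (m w : Fin n) : Prop :=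
  ∃ k < n * n + 1, m ∈ proposers P (stateAt P k) w

/-- the men-proposing DA makes the maximum possible number `n² - n + 1` of proposals -/
def MaxProp (P : Profile n) : Prop := P.totalProposals = n * n + 1 - n

/-- the men-proposing DA takes the maximum possible number `n² - 2n + 2` of rounds -/
def MaxRou (P : Profile n) : Prop := P.rounds = n * n + 2 - 2 * n

/-- a matching (a bijection man ↦ woman) is stable iff no man-woman pair mutually
prefer each other to their assigned partners -/
def Stable (P : Profile n) (μ : Fin n ≃ Fin n) : Prop :=
  ¬ ∃ (m w : Fin n), P.mPrefers m w (μ m) ∧ P.wPrefers w m (μ.symm w)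

/-- the profile admits a unique stable matching -/
def USM (P : Profile n) : Prop := ∃! μ : Fin n ≃ Fin n, P.Stable μ

/-- the sequential preference condition of Eeckhout (2000) -/
def SPC (P : Profile n) : Prop :=
  ∃ σ τ : Equiv.Perm (Fin n), ∀ i j : Fin n, i < j →
    P.mPrefers (σ i) (τ i) (τ j) ∧ P.wPrefers (τ i) (σ i) (σ j)

/-- the no crossing condition of Clark (2006) -/
def NCC (P : Profile n) : Prop :=
  ∃ σ τ : Equiv.Perm (Fin n), ∀ i j k l : Fin n, i < j → k < l →
    (P.mPrefers (σ i) (τ l) (τ k) → P.mPrefers (σ j) (τ l) (τ k)) ∧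
    (P.wPrefers (τ k) (σ j) (σ i) → P.wPrefers (τ l) (σ j) (σ i))

/-!
The women a man has proposed to all still hold somebody, and distinct women hold distinct
matched men, so at every round `next m + #(unmatched s) ≤ n` for every man `m`. Hence an
unmatched man has made fewer than `n` proposals, once some man has made `n` proposals nobody
is unmatched any more, and a man can only make his `n`-th proposal as the sole unmatched man.
So at most one man ever makes `n` proposals and every other man makes at most `n - 1`.
-/

section DeferredAcceptance

open Finset

variable {P : Profile n} {s : DAState n}

lemma mrank_injective (P : Profile n) (m : Fin n) : Function.Injective (P.mrank m) :=
  Fin.val_injective.comp (P.mpref m).symm.injective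

lemma card_filter_mrank_lt {m : Fin n} {k : ℕ} (hk : k ≤ n) :
    #{w | P.mrank m w < k} = k := by
  rw [card_equiv (P.mpref m).symm (t := {i : Fin n | (i : ℕ) < k})
      (fun w => by simp only [mem_filter]; simp [mrank]),
    Fin.card_filter_val_lt, min_eq_right hk]

lemma mrank_target {m : Fin n} (h : s.next m < n) : P.mrank m (target P s m) = s.next m := by
  simp [mrank, target, Nat.mod_eq_of_lt h]

lemma mem_unmatched_iff {m : Fin n} : m ∈ unmatched s ↔ ∀ w, s.held w ≠ some m := by
  simp [unmatched]

lemma mem_proposers_iff {w m : Fin n} :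
    m ∈ proposers P s w ↔ m ∈ unmatched s ∧ target P s m = w := by
  simp [proposers]

lemma next_step {m : Fin n} :
    (step P s).next m = if m ∈ unmatched s then s.next m + 1 else s.next m := rfl

lemma mem_proposers_or_held_of_held_step {w m : Fin n} (h : (step P s).held w = some m) :
    m ∈ proposers P s w ∨ s.held w = some m := by
  have hm : m ∈ (proposers P s w ∪ (s.held w).toFinset).toList :=
    List.argmin_mem (f := P.wrank w) h
  simpa only [mem_toList, mem_union, Option.mem_toFinset, Option.mem_def] using hm

lemma held_step_ne_none {w m : Fin n} (h : m ∈ proposers P s w ∨ s.held w = some m) :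
    (step P s).held w ≠ none := by
  intro hnone
  have hempty := toList_eq_nil.mp (List.argmin_eq_none.mp hnone)
  have hm : m ∈ proposers P s w ∪ (s.held w).toFinset := by simpa using h
  simp [hempty] at hm

lemma held_step_ne_none_of_held {w : Fin n} (h : s.held w ≠ none) :
    (step P s).held w ≠ none := by
  obtain ⟨m, hm⟩ := Option.ne_none_iff_exists'.mp h
  exact held_step_ne_none (.inr hm)

lemma card_add_card_unmatched_le
    (hinj : ∀ w w' m, s.held w = some m → s.held w' = some m → w = w')
    {R : Finset (Fin n)} (hR : ∀ w ∈ R, s.held w ≠ none) :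
    #R + #(unmatched s) ≤ n := by
  have hheld : ∀ w ∈ R, s.held w = some ((s.held w).getD w) := fun w hw => by
    obtain ⟨m, hm⟩ := Option.ne_none_iff_exists'.mp (hR w hw)
    simp [hm]
  have hcard : #R ≤ #(unmatched s)ᶜ := by
    refine card_le_card_of_injOn (fun w => (s.held w).getD w) (fun w hw => ?_) ?_
    · simpa [mem_unmatched_iff] using ⟨w, hheld w hw⟩
    · intro w hw w' hw' (heq : (s.held w).getD w = (s.held w').getD w')
      exact hinj w w' _ (hheld w hw) (heq ▸ hheld w' hw')
  calc #R + #(unmatched s) ≤ #(unmatched s)ᶜ + #(unmatched s) := by gcongr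
    _ = n := by rw [card_compl_add_card, Fintype.card_fin]

structure Invariant (P : Profile n) (s : DAState n) : Prop where
  held_inj : ∀ w w' m, s.held w = some m → s.held w' = some m → w = w'
  next_le : ∀ m, s.next m ≤ n
  held_of_mrank_lt_next : ∀ m w, P.mrank m w < s.next m → s.held w ≠ none
  eq_of_next_eq : ∀ m m', s.next m = n → s.next m' = n → m = m'

namespace Invariant

lemma next_add_card_unmatched_le (hI : Invariant P s) (m : Fin n) :
    s.next m + #(unmatched s) ≤ n := by
  have := card_add_card_unmatched_le hI.held_inj (R := {w | P.mrank m w < s.next m})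
    (by simpa using hI.held_of_mrank_lt_next m)
  rwa [card_filter_mrank_lt (hI.next_le m)] at this

lemma next_lt_of_mem_unmatched (hI : Invariant P s) {m : Fin n} (hm : m ∈ unmatched s) :
    s.next m < n := by
  have := hI.next_add_card_unmatched_le m
  have := card_pos.mpr ⟨m, hm⟩
  omega

lemma unmatched_eq_empty_of_next_eq (hI : Invariant P s) {m : Fin n} (hm : s.next m = n) :
    unmatched s = ∅ := by
  have := hI.next_add_card_unmatched_le m
  exact card_eq_zero.mp (by omega)

lemma step (hI : Invariant P s) : Invariant P (Profile.step P s) where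
  held_inj w w' m hw hw' := by
    rcases mem_proposers_or_held_of_held_step hw with hp | ho <;>
      rcases mem_proposers_or_held_of_held_step hw' with hp' | ho'
    · rw [← (mem_proposers_iff.mp hp).2, ← (mem_proposers_iff.mp hp').2]
    · exact absurd ho' (mem_unmatched_iff.mp (mem_proposers_iff.mp hp).1 w')
    · exact absurd ho (mem_unmatched_iff.mp (mem_proposers_iff.mp hp').1 w)
    · exact hI.held_inj w w' m ho ho'
  next_le m := by
    rw [next_step]
    split_ifs with hm
    · exact hI.next_lt_of_mem_unmatched hm
    · exact hI.next_le m
  held_of_mrank_lt_next m w hw := by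
    rw [next_step] at hw
    split_ifs at hw with hm
    · rcases (Nat.lt_succ_iff.mp hw).lt_or_eq with hlt | heq
      · exact held_step_ne_none_of_held (hI.held_of_mrank_lt_next m w hlt)
      · have htarget : target P s m = w := mrank_injective P m <| by
          rw [mrank_target (hI.next_lt_of_mem_unmatched hm), heq]
        exact held_step_ne_none (.inl (mem_proposers_iff.mpr ⟨hm, htarget⟩))
    · exact held_step_ne_none_of_held (hI.held_of_mrank_lt_next m w hw)
  eq_of_next_eq m m' h h' := by
    have last : ∀ m, (Profile.step P s).next m = n →
        m ∈ unmatched s ∧ s.next m + 1 = n ∨ s.next m = n := by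
      intro m hm
      rw [next_step] at hm
      split_ifs at hm with hu
      exacts [.inl ⟨hu, hm⟩, .inr hm]
    rcases last m h with ⟨hm, e⟩ | e <;> rcases last m' h' with ⟨hm', e'⟩ | e'
    · by_contra hne
      have := one_lt_card.mpr ⟨m, hm, m', hm', hne⟩
      have := hI.next_add_card_unmatched_le m
      omega
    · simp [hI.unmatched_eq_empty_of_next_eq e'] at hm
    · simp [hI.unmatched_eq_empty_of_next_eq e] at hm'
    · exact hI.eq_of_next_eq m m' e e'

end Invariant

lemma invariant_initState (P : Profile n) : Invariant P (initState n) where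
  held_inj := by simp [initState]
  next_le := by simp [initState]
  held_of_mrank_lt_next := by simp [initState]
  eq_of_next_eq m _ h := absurd h m.pos.ne

lemma invariant_stateAt (P : Profile n) (k : ℕ) : Invariant P (stateAt P k) := by
  induction k with
  | zero => exact invariant_initState P
  | succ k ih =>
    rw [stateAt, Function.iterate_succ_apply']
    exact ih.step

end DeferredAcceptance

end Profile

open Finset in
lemma Finset.sum_le_card_mul_pred_add_one {ι : Type*} [Fintype ι] {f : ι → ℕ} {c : ℕ}
    (hle : ∀ i, f i ≤ c) (huniq : ∀ i j, f i = c → f j = c → i = j) :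
    ∑ i, f i ≤ Fintype.card ι * (c - 1) + 1 :=
  calc ∑ i, f i ≤ ∑ i, ((c - 1) + if f i = c then 1 else 0) :=
        sum_le_sum fun i _ => by have := hle i; split_ifs <;> omega
    _ = Fintype.card ι * (c - 1) + #{i | f i = c} := by simp [sum_add_distrib]
    _ ≤ Fintype.card ι * (c - 1) + 1 := by
        gcongr
        exact card_le_one.mpr fun i hi j hj => huniq i j (mem_filter.mp hi).2 (mem_filter.mp hj).2

/-- The men-proposing DA makes at most `n² - n + 1` proposals in total. -/
theorem da_totalProposals_le (n : ℕ) (P : Profile n) :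
    P.totalProposals ≤ n * n + 1 - n := by
  have hI := Profile.invariant_stateAt P (n * n + 1)
  calc P.totalProposals ≤ Fintype.card (Fin n) * (n - 1) + 1 :=
        Finset.sum_le_card_mul_pred_add_one hI.next_le hI.eq_of_next_eq
    _ = n * n + 1 - n := by
        rw [Fintype.card_fin, Nat.mul_sub_one]
        have := Nat.le_mul_self n
        omega
end
end

section
/- For every n >= 1, there exists a preference profile with n men and n women on which the men-proposing deferred acceptance algorithm makes exactly n^2 - n + 1 proposals and runs for exactly n^2 - 2n + 2 rounds. -/
open scoped Classical

noncomputable section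

/-!
Index men and women from `0` and put `m = n - 1`. On `Profile.cyclic m` the `p`-th proposal of
deferred acceptance (`p = 0, …, m (m + 1)`, counting from `0`) is made by man `p mod (m + 1)`, as
his `(p / (m + 1))`-th choice, to woman `p mod m` (the last one to woman `m`), and every proposal
is accepted: the `k`-th man to propose to a woman is her `(m - k)`-th choice, so she always prefers
the newcomer and rejects the man she held, who is the one to propose next. Hence all `m + 1` men
propose in round 1 and a single man in each later round, until the last proposal reaches woman
`m`, free until then: `m (m + 1) + 1` proposals in `m² + 1` rounds.
-/

theorem val_finRotate_pow_apply (m j : ℕ) (k : Fin m) :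
    ((finRotate m ^ j) k : ℕ) = (k + j) % m := by
  obtain ⟨m, rfl⟩ : ∃ m', m = m' + 1 := ⟨m - 1, by have := k.pos; omega⟩
  induction j with
  | zero => simp [Nat.mod_eq_of_lt k.isLt]
  | succ j ih =>
    rw [pow_succ', Equiv.Perm.mul_apply, coe_finRotate, ← Nat.add_assoc]
    split_ifs with h
    · rw [eq_comm, Nat.succ_mod_succ_eq_zero_iff, ← ih, h, Fin.val_last]
    · have hlt : (k + j) % (m + 1) < m := by
        rw [← ih]; exact lt_of_le_of_ne (Fin.le_last _) fun h' => h (Fin.ext h')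
      rw [ih, Nat.add_mod (↑k + j) 1, Nat.mod_eq_of_lt (a := 1) (by omega),
        Nat.mod_eq_of_lt (a := (↑k + j) % (m + 1) + 1) (by omega)]

def finRotateInit (m r : ℕ) : Equiv.Perm (Fin (m + 1)) :=
  (finSuccEquivLast.trans (Equiv.optionCongr (finRotate m ^ r))).trans finSuccEquivLast.symm

theorem val_finRotateInit_castSucc (m r : ℕ) (k : Fin m) :
    (finRotateInit m r k.castSucc : ℕ) = (k + r) % m := by
  simp [finRotateInit, val_finRotate_pow_apply]

theorem finRotateInit_last (m r : ℕ) : finRotateInit m r (Fin.last m) = Fin.last m := by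
  simp [finRotateInit]

theorem Option.argmin_toFinset_toList {α β : Type*} [LinearOrder β] (f : α → β)
    (o : Option α) : o.toFinset.toList.argmin f = o := by
  cases o <;> simp

theorem Finset.argmin_toList_eq_some {α β : Type*} [LinearOrder β] [DecidableEq α]
    {s : Finset α} {f : α → β} {a : α} (ha : a ∈ s) (hmin : ∀ b ∈ s, b ≠ a → f a < f b) :
    s.toList.argmin f = some a := by
  have hle : ∀ b ∈ s, f a ≤ f b := fun b hb =>
    (eq_or_ne b a).elim (fun h => h ▸ le_rfl) fun h => (hmin b hb h).le
  have heq : ∀ b ∈ s, f b ≤ f a → b = a := fun b hb hba =>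
    by_contra fun h => (hmin b hb h).not_ge hba
  rw [List.argmin_eq_some_iff]
  refine ⟨Finset.mem_toList.2 ha, fun b hb => hle b (Finset.mem_toList.1 hb),
    fun b hb hba => ?_⟩
  rw [heq b (Finset.mem_toList.1 hb) hba]

namespace Profile

variable {n : ℕ}

@[ext]
theorem DAState.ext {s t : DAState n} (hnext : s.next = t.next) (hheld : s.held = t.held) :
    s = t := by
  cases s; cases t; cases hnext; cases hheld; rfl

theorem stateAt_succ (P : Profile n) (k : ℕ) : P.stateAt (k + 1) = P.step (P.stateAt k) :=
  Function.iterate_succ_apply' _ _ _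

theorem stateAt_eq_of_le {P : Profile n} {K k : ℕ} (hK : P.step (P.stateAt K) = P.stateAt K)
    (hk : K ≤ k) : P.stateAt k = P.stateAt K := by
  obtain ⟨j, rfl⟩ := Nat.exists_eq_add_of_le hk
  rw [stateAt, add_comm, Function.iterate_add_apply]
  exact Function.iterate_fixed hK j

theorem unmatched_initState : unmatched (initState n) = Finset.univ := by
  ext m
  simp [unmatched, initState]

theorem step_eq_self {P : Profile n} {s : DAState n} (h : unmatched s = ∅) : P.step s = s := by
  ext1
  · funext m
    simp [step, h]
  · funext w
    simp [step, proposers, h, Option.argmin_toFinset_toList]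

theorem wrank_eq_of_wpref_eq {P : Profile n} {w x k : Fin n} (h : P.wpref w k = x) :
    P.wrank w x = k := by
  rw [wrank, ← h, Equiv.symm_apply_apply]

/-- The state reached when the proposals `k = 0, 1, …`, of man `f k` to woman `g k`, are made one
at a time and every one of them is accepted. -/
def acceptAll (f g : ℕ → Fin n) : ℕ → DAState n
  | 0 => initState n
  | k + 1 =>
    let s := acceptAll f g k
    ⟨Function.update s.next (f k) (s.next (f k) + 1), Function.update s.held (g k) (some (f k))⟩

section acceptAll

variable {f g : ℕ → Fin n}

theorem acceptAll_next (k : ℕ) (i : Fin n) :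
    (acceptAll f g k).next i = Nat.count (fun p => f p = i) k := by
  induction k with
  | zero => rfl
  | succ k ih =>
    rw [Nat.count_succ, ← ih]
    by_cases h : i = f k
    · subst h
      simp only [acceptAll, Function.update_self, if_true]
    · simp only [acceptAll, Function.update_of_ne h, if_neg (Ne.symm h), add_zero]

theorem sum_acceptAll_next (k : ℕ) : ∑ i, (acceptAll f g k).next i = k := by
  simp only [acceptAll_next, Nat.count_eq_card_filter_range]
  rw [← Finset.card_eq_sum_card_fiberwise (fun p _ => Finset.mem_univ (f p)), Finset.card_range]

theorem acceptAll_held_of_forall_ne {a b : ℕ} {w : Fin n} (hab : a ≤ b)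
    (h : ∀ p, a ≤ p → p < b → g p ≠ w) :
    (acceptAll f g b).held w = (acceptAll f g a).held w := by
  induction b, hab using Nat.le_induction with
  | base => rfl
  | succ b hab ih =>
    simp only [acceptAll, Function.update_apply, if_neg (h b hab b.lt_succ_self).symm]
    exact ih fun p hap hpb => h p hap (hpb.trans b.lt_succ_self)

theorem acceptAll_held_of_latest {q k : ℕ} (hqk : q < k)
    (h : ∀ p, q < p → p < k → g p ≠ g q) : (acceptAll f g k).held (g q) = some (f q) := by
  rw [acceptAll_held_of_forall_ne hqk h]
  exact Function.update_self _ _ _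

theorem exists_latest_of_acceptAll_held {k : ℕ} {w x : Fin n}
    (h : (acceptAll f g k).held w = some x) :
    ∃ q < k, g q = w ∧ f q = x ∧ ∀ p, q < p → p < k → g p ≠ w := by
  induction k with
  | zero => simp [acceptAll, initState] at h
  | succ k ih =>
    simp only [acceptAll, Function.update_apply] at h
    split_ifs at h with hw
    · exact ⟨k, k.lt_succ_self, hw.symm, Option.some.inj h, fun p hkp hpk => by omega⟩
    · obtain ⟨q, hqk, hgq, hfq, hlatest⟩ := ih h
      refine ⟨q, hqk.trans k.lt_succ_self, hgq, hfq, fun p hqp hpk => ?_⟩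
      rcases Nat.lt_succ_iff_lt_or_eq.1 hpk with hpk | rfl
      · exact hlatest p hqp hpk
      · exact fun hp => hw hp.symm

theorem acceptAll_next_add {a b : ℕ} (hab : a ≤ b) (hinj : Set.InjOn f (Finset.Ico a b))
    (i : Fin n) :
    (acceptAll f g b).next i =
      (acceptAll f g a).next i + if i ∈ (Finset.Ico a b).image f then 1 else 0 := by
  have hsplit : Finset.range b = Finset.range a ∪ Finset.Ico a b := by
    rw [Finset.range_eq_Ico, Finset.range_eq_Ico, Finset.Ico_union_Ico_eq_Ico (Nat.zero_le a) hab]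
  have hdisj : Disjoint (Finset.range a) (Finset.Ico a b) := by
    rw [Finset.range_eq_Ico]; exact Finset.Ico_disjoint_Ico_consecutive 0 a b
  have hfiber : ((Finset.Ico a b).filter (f · = i)).card =
      if i ∈ (Finset.Ico a b).image f then 1 else 0 := by
    rw [← Finset.card_image_of_injOn (hinj.mono (Finset.coe_subset.2 (Finset.filter_subset _ _))),
      ← Finset.filter_image (p := (· = i)), Finset.filter_eq']
    split_ifs <;> rfl
  rw [acceptAll_next, acceptAll_next, Nat.count_eq_card_filter_range,
    Nat.count_eq_card_filter_range, hsplit, Finset.filter_union,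
    Finset.card_union_of_disjoint (Finset.disjoint_filter_filter hdisj), hfiber]

theorem step_acceptAll {P : Profile n} {a b : ℕ} (hab : a ≤ b)
    (hunm : unmatched (acceptAll f g a) = (Finset.Ico a b).image f)
    (hinj : Set.InjOn f (Finset.Ico a b))
    (htarget : ∀ p ∈ Finset.Ico a b, P.target (acceptAll f g a) (f p) = g p)
    (hpref : ∀ q p, q < p → p < b → g q = g p → P.wrank (g p) (f p) < P.wrank (g p) (f q)) :
    P.step (acceptAll f g a) = acceptAll f g b := by
  ext1
  · funext i
    show (if i ∈ unmatched _ then _ + 1 else _) = _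
    rw [acceptAll_next_add hab hinj, hunm]
    split_ifs <;> rfl
  funext w
  have hprop : P.proposers (acceptAll f g a) w = ((Finset.Ico a b).filter (g · = w)).image f := by
    rw [proposers, hunm, Finset.filter_image]
    exact congrArg _ (Finset.filter_congr fun p hp => by rw [htarget p hp])
  show ((P.proposers _ w ∪ _).toList).argmin (P.wrank w) = _
  rw [hprop]
  by_cases hw : ((Finset.Ico a b).filter (g · = w)).Nonempty
  · obtain ⟨q, hq, hmax⟩ : ∃ q ∈ (Finset.Ico a b).filter (g · = w),
        ∀ p ∈ (Finset.Ico a b).filter (g · = w), p ≤ q :=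
      ⟨_, Finset.max'_mem _ hw, fun p hp => Finset.le_max' _ p hp⟩
    obtain ⟨hqab, rfl⟩ := Finset.mem_filter.1 hq
    obtain ⟨haq, hqb⟩ := Finset.mem_Ico.1 hqab
    have hlatest : ∀ p, q < p → p < b → g p ≠ g q := fun p hqp hpb hp =>
      (hmax p (Finset.mem_filter.2 ⟨Finset.mem_Ico.2 ⟨by omega, hpb⟩, hp⟩)).not_gt hqp
    rw [acceptAll_held_of_latest hqb hlatest]
    refine Finset.argmin_toList_eq_some (Finset.mem_union_left _ (Finset.mem_image_of_mem f hq)) ?_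
    intro x hx hxq
    rcases Finset.mem_union.1 hx with hx | hx
    · obtain ⟨p, hp, rfl⟩ := Finset.mem_image.1 hx
      have hpq : p < q := lt_of_le_of_ne (hmax p hp) fun h => hxq (h ▸ rfl)
      exact hpref p q hpq hqb (Finset.mem_filter.1 hp).2
    · obtain ⟨q', hq'a, hgq', rfl, -⟩ :=
        exists_latest_of_acceptAll_held (Option.mem_toFinset.1 hx)
      exact hpref q' q (by omega) hqb hgq'
  · have hnone : ∀ p, a ≤ p → p < b → g p ≠ w := fun p hap hpb hp =>
      hw ⟨p, Finset.mem_filter.2 ⟨Finset.mem_Ico.2 ⟨hap, hpb⟩, hp⟩⟩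
    rw [Finset.not_nonempty_iff_eq_empty.1 hw, Finset.image_empty, Finset.empty_union,
      Option.argmin_toFinset_toList, acceptAll_held_of_forall_ne hab hnone]

end acceptAll

/-- The profile of the statement with everything indexed from `0`: man `i < m` ranks the women
`i, i + 1, …, m - 1, 0, …, i - 1` and then `m`, man `m` ranks `0, 1, …, m`, and woman `w` ranks
the men `w + 1, w + 2, …` cyclically. -/
def cyclic (m : ℕ) : Profile (m + 1) where
  mpref i := finRotateInit m i
  wpref w := finRotate (m + 1) ^ ((w : ℕ) + 1)

namespace cyclic

variable {m : ℕ}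

def proposer (m p : ℕ) : Fin (m + 1) := ⟨p % (m + 1), Nat.mod_lt _ m.succ_pos⟩

def recipient (m p : ℕ) : Fin (m + 1) :=
  ⟨if p < m * (m + 1) then p % m else m, by
    split_ifs with h
    · exact (Nat.mod_lt _ (Nat.pos_of_mul_pos_right (Nat.zero_lt_of_lt h))).trans m.lt_succ_self
    · exact m.lt_succ_self⟩

theorem proposer_eq_iff {p q : ℕ} : proposer m p = proposer m q ↔ p ≡ q [MOD m + 1] := by
  simp [proposer, Fin.ext_iff, Nat.ModEq]

theorem exists_proposer_eq (a : ℕ) (i : Fin (m + 1)) :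
    ∃ q, a ≤ q ∧ q ≤ a + m ∧ proposer m q = i := by
  have ha := Nat.div_add_mod a (m + 1)
  have hr : a % (m + 1) < m + 1 := Nat.mod_lt a (by omega)
  have hi := i.isLt
  have hval : ∀ t, proposer m ((m + 1) * t + i) = i := fun t =>
    Fin.ext (by simp [proposer, Nat.mod_eq_of_lt hi])
  by_cases h : a % (m + 1) ≤ i
  · exact ⟨_, by omega, by omega, hval (a / (m + 1))⟩
  · refine ⟨_, ?_, ?_, hval (a / (m + 1) + 1)⟩ <;> rw [Nat.mul_add_one] <;> omega

theorem recipient_add_self {q : ℕ} (hq : q + m < m * (m + 1)) :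
    recipient m (q + m) = recipient m q := by
  simp [recipient, hq, show q < m * (m + 1) by omega]

theorem lt_and_add_le_of_recipient_eq {q p : ℕ} (hqp : q < p) (hp : p ≤ m * (m + 1))
    (h : recipient m q = recipient m p) : p < m * (m + 1) ∧ q + m ≤ p := by
  have hq : q < m * (m + 1) := by omega
  have hm : 0 < m := Nat.pos_of_mul_pos_right (Nat.zero_lt_of_lt hq)
  simp only [recipient, Fin.ext_iff, if_pos hq] at h
  by_cases hp' : p < m * (m + 1)
  · rw [if_pos hp'] at h
    exact ⟨hp', Nat.ModEq.add_le_of_lt h hqp⟩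
  · rw [if_neg hp'] at h
    exact absurd h (Nat.mod_lt _ hm).ne

theorem target_proposer {s : DAState (m + 1)} {p : ℕ} (hp : p ≤ m * (m + 1))
    (hs : s.next (proposer m p) = p / (m + 1)) :
    (cyclic m).target s (proposer m p) = recipient m p := by
  have hdiv : p / (m + 1) ≤ m := Nat.div_le_of_le_mul (by rwa [Nat.mul_comm])
  simp only [target, hs, Nat.mod_eq_of_lt (Nat.lt_succ_of_le hdiv)]
  by_cases h : p < m * (m + 1)
  · have hlt : p / (m + 1) < m := (Nat.div_lt_iff_lt_mul m.succ_pos).2 h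
    rw [show (⟨p / (m + 1), _⟩ : Fin (m + 1)) = Fin.castSucc ⟨p / (m + 1), hlt⟩ from rfl]
    apply Fin.ext
    simp only [cyclic, val_finRotateInit_castSucc, recipient, proposer, if_pos h]
    rw [← Nat.add_mul_mod_self_left _ m (p / (m + 1))]
    congr 1
    linarith [Nat.div_add_mod p (m + 1)]
  · obtain rfl : p = m * (m + 1) := by omega
    have hlast : (⟨m * (m + 1) / (m + 1), Nat.lt_succ_of_le hdiv⟩ : Fin (m + 1)) = Fin.last m :=
      Fin.ext (Nat.mul_div_cancel m m.succ_pos)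
    rw [hlast, cyclic, finRotateInit_last]
    exact Fin.ext (by simp [recipient])

theorem wrank_recipient_proposer {p : ℕ} (hp : p < m * (m + 1)) :
    (cyclic m).wrank (recipient m p) (proposer m p) = m - p / m := by
  have hm : 0 < m := Nat.pos_of_mul_pos_right (Nat.zero_lt_of_lt hp)
  have hdiv : p / m < m + 1 := (Nat.div_lt_iff_lt_mul hm).2 (by rwa [Nat.mul_comm])
  refine wrank_eq_of_wpref_eq (k := ⟨m - p / m, Nat.lt_succ_of_le (Nat.sub_le m _)⟩)
    (Fin.ext ?_)
  simp only [cyclic, val_finRotate_pow_apply, recipient, proposer, if_pos hp]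
  have hdecomp := Nat.mod_add_div p m
  have hmul : (m + 1) * (p / m) = m * (p / m) + p / m := by ring
  rw [← Nat.add_mul_mod_self_left _ (m + 1) (p / m),
    show m - p / m + (p % m + 1) + (m + 1) * (p / m) = p + (m + 1) by omega, Nat.add_mod_right]

theorem wrank_proposer_lt_of_recipient_eq {q p : ℕ} (hqp : q < p) (hp : p ≤ m * (m + 1))
    (h : recipient m q = recipient m p) :
    (cyclic m).wrank (recipient m p) (proposer m p) <
      (cyclic m).wrank (recipient m p) (proposer m q) := by
  obtain ⟨hp', hle⟩ := lt_and_add_le_of_recipient_eq hqp hp h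
  have hm : 0 < m := Nat.pos_of_mul_pos_right (Nat.zero_lt_of_lt hp')
  have hdiv : p / m < m + 1 := (Nat.div_lt_iff_lt_mul hm).2 (by rwa [Nat.mul_comm])
  have hqdiv : q / m + 1 ≤ p / m := Nat.add_div_right q hm ▸ Nat.div_le_div_right hle
  rw [wrank_recipient_proposer hp', ← h, wrank_recipient_proposer (by omega)]
  omega

theorem acceptAll_next_proposer (g : ℕ → Fin (m + 1)) (P : ℕ) :
    (acceptAll (proposer m) g P).next (proposer m P) = P / (m + 1) := by
  rw [acceptAll_next]
  simp_rw [proposer_eq_iff]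
  rw [Nat.count_modEq_card P m.succ_pos, if_neg (lt_irrefl _), add_zero]

theorem acceptAll_held_recipient {q P : ℕ} (hqP : q < P) (hP : P ≤ m * (m + 1) + 1)
    (hlate : P ≤ q + m ∨ m * (m + 1) ≤ q + m) :
    (acceptAll (proposer m) (recipient m) P).held (recipient m q) = some (proposer m q) :=
  acceptAll_held_of_latest hqP fun p hqp hpP h => by
    obtain ⟨hp', hle⟩ := lt_and_add_le_of_recipient_eq hqp (by omega) h.symm
    omega

theorem unmatched_acceptAll_eq_singleton {P : ℕ} (hP1 : m + 1 ≤ P) (hP2 : P ≤ m * (m + 1)) :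
    unmatched (acceptAll (proposer m) (recipient m) P) = {proposer m P} := by
  ext i
  simp only [unmatched, Finset.mem_filter, Finset.mem_univ, true_and, Finset.mem_singleton]
  constructor
  · intro hi
    by_contra hne
    obtain ⟨q, hq1, hq2, rfl⟩ := exists_proposer_eq (P - m) i
    have hqP : q ≠ P := fun h => hne (h ▸ rfl)
    exact hi _ (acceptAll_held_recipient (by omega) (by omega) (Or.inl (by omega)))
  · rintro rfl w hw
    obtain ⟨q, hqP, rfl, hpq, hlatest⟩ := exists_latest_of_acceptAll_held hw
    have hle := Nat.ModEq.add_le_of_lt (proposer_eq_iff.1 hpq) hqP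
    have hm : 0 < m := Nat.pos_of_ne_zero (by rintro rfl; omega)
    exact hlatest (q + m) (by omega) (by omega) (recipient_add_self (by omega))

theorem unmatched_acceptAll_eq_empty :
    unmatched (acceptAll (proposer m) (recipient m) (m * (m + 1) + 1)) = ∅ := by
  ext i
  simp only [unmatched, Finset.mem_filter, Finset.mem_univ, true_and, Finset.notMem_empty,
    iff_false, not_forall, not_not]
  obtain ⟨q, hq1, hq2, rfl⟩ := exists_proposer_eq (m * m) i
  have hmm : m * (m + 1) = m * m + m := Nat.mul_succ m m
  exact ⟨_, acceptAll_held_recipient (by omega) le_rfl (Or.inr (by omega))⟩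

theorem stateAt_one_eq_acceptAll :
    (cyclic m).stateAt 1 = acceptAll (proposer m) (recipient m) (m + 1) := by
  have hm : m ≤ m * (m + 1) := Nat.le_mul_of_pos_right m m.succ_pos
  have hinj : Set.InjOn (proposer m) (Finset.Ico 0 (m + 1)) := fun p hp q hq h => by
    simp only [Finset.coe_Ico, Set.mem_Ico] at hp hq
    have := proposer_eq_iff.1 h
    rwa [Nat.ModEq, Nat.mod_eq_of_lt hp.2, Nat.mod_eq_of_lt hq.2] at this
  have himage : (Finset.Ico 0 (m + 1)).image (proposer m) = Finset.univ :=
    Finset.eq_univ_of_forall fun i => Finset.mem_image.2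
      ⟨i, Finset.mem_Ico.2 ⟨i.val.zero_le, i.isLt⟩, Fin.ext (Nat.mod_eq_of_lt i.isLt)⟩
  refine step_acceptAll (Nat.zero_le _) (by rw [himage]; exact unmatched_initState) hinj
    (fun p hp => ?_) (fun q p hqp hpb h => wrank_proposer_lt_of_recipient_eq hqp (by omega) h)
  have hp' := (Finset.mem_Ico.1 hp).2
  exact target_proposer (by omega) (Nat.div_eq_of_lt hp').symm

theorem stateAt_succ_eq_acceptAll {k : ℕ} (hk : k ≤ m * m) :
    (cyclic m).stateAt (k + 1) = acceptAll (proposer m) (recipient m) (m + 1 + k) := by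
  induction k with
  | zero => exact stateAt_one_eq_acceptAll
  | succ k ih =>
    have hmm : m * (m + 1) = m * m + m := Nat.mul_succ m m
    rw [stateAt_succ, ih (by omega), ← Nat.add_assoc]
    refine step_acceptAll (Nat.le_succ _) ?_ ?_ ?_
      fun q p hqp hpb h => wrank_proposer_lt_of_recipient_eq hqp (by omega) h
    · rw [unmatched_acceptAll_eq_singleton (by omega) (by omega), Nat.Ico_succ_singleton,
        Finset.image_singleton]
    · rw [Nat.Ico_succ_singleton, Finset.coe_singleton]
      exact Set.injOn_singleton _ _
    · intro p hp
      rw [Nat.Ico_succ_singleton, Finset.mem_singleton] at hp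
      subst hp
      exact target_proposer (by omega) (acceptAll_next_proposer _ _)

theorem stateAt_eq_acceptAll_of_le {k : ℕ} (hk : m * m + 1 ≤ k) :
    (cyclic m).stateAt k = acceptAll (proposer m) (recipient m) (m * (m + 1) + 1) := by
  have hfinal : (cyclic m).stateAt (m * m + 1) =
      acceptAll (proposer m) (recipient m) (m * (m + 1) + 1) := by
    rw [stateAt_succ_eq_acceptAll le_rfl]
    congr 1
    ring
  rw [stateAt_eq_of_le (by rw [hfinal]; exact step_eq_self unmatched_acceptAll_eq_empty) hk, hfinal]

theorem unmatched_stateAt_nonempty_iff (k : ℕ) :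
    (unmatched ((cyclic m).stateAt k)).Nonempty ↔ k ≤ m * m := by
  rcases k with _ | k
  · simp only [Nat.zero_le, iff_true]
    show (unmatched (initState (m + 1))).Nonempty
    rw [unmatched_initState]
    exact Finset.univ_nonempty
  by_cases hk : k < m * m
  · have hmm : m * (m + 1) = m * m + m := Nat.mul_succ m m
    rw [stateAt_succ_eq_acceptAll hk.le, unmatched_acceptAll_eq_singleton (by omega) (by omega)]
    simp only [Finset.singleton_nonempty, true_iff]
    omega
  · rw [stateAt_eq_acceptAll_of_le (by omega), unmatched_acceptAll_eq_empty]
    simp only [Finset.not_nonempty_empty, false_iff]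
    omega

end cyclic

theorem totalProposals_cyclic (m : ℕ) : (cyclic m).totalProposals = m * (m + 1) + 1 := by
  rw [totalProposals, finalState, cyclic.stateAt_eq_acceptAll_of_le (by nlinarith),
    sum_acceptAll_next]

theorem rounds_cyclic (m : ℕ) : (cyclic m).rounds = m * m + 1 := by
  have hsq : (m + 1) * (m + 1) = m * m + 2 * m + 1 := by ring
  have hrounds : (Finset.range ((m + 1) * (m + 1) + 1)).filter
      (fun k => (unmatched ((cyclic m).stateAt k)).Nonempty) = Finset.range (m * m + 1) := by
    ext k
    simp only [Finset.mem_filter, Finset.mem_range, cyclic.unmatched_stateAt_nonempty_iff]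
    omega
  rw [rounds, hrounds, Finset.card_range]

end Profile

/-- For every `n ≥ 1` there is a profile on which the men-proposing DA makes
exactly `n² - n + 1` proposals and runs for exactly `n² - 2n + 2` rounds. -/
theorem da_bounds_achievable (n : ℕ) (hn : 1 ≤ n) :
    ∃ P : Profile n, P.totalProposals = n * n + 1 - n ∧ P.rounds = n * n + 2 - 2 * n := by
  obtain ⟨m, rfl⟩ : ∃ m, n = m + 1 := ⟨n - 1, by omega⟩
  have hsq : (m + 1) * (m + 1) = m * m + 2 * m + 1 := by ring
  refine ⟨Profile.cyclic m, ?_, ?_⟩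
  · rw [Profile.totalProposals_cyclic, Nat.mul_succ]
    omega
  · rw [Profile.rounds_cyclic]
    omega
end
end
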